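/- Epoch contraction for deterministic VMD: suppose at the start of an epoch ‖V̂_k − V*‖_∞ ≤ u, ‖(I−γP_{π*})^{-1} D_{π̂_k}^{π*}‖_∞ ≤ D/(1−γ), and V̂_k ≥ Γ_{π̂_k} V̂_k. Running T = ⌈4/(1−γ)⌉ iterations of value mirror descent with stepsize η = D/u yields outputs satisfying ‖V^{π̂_{k+1}} − V*‖_∞ ≤ ‖V̂_{k+1} − V*‖_∞ ≤ u/2 and ‖(I−γP_{π*})^{-1} D_{π̂_{k+1}}^{π*}‖_∞ ≤ 2D/(1−γ). -/

import Mathlib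

/-!
The three-point inequality with `p = π_t` gives `Γ_{π_{t+1}} V_t ≤ Γ_{π_t} V_t ≤ V_t`, so the
values decrease along the epoch and stay above the fixed point `W` of `Γ_{π_T}`, hence above
`V*`. With `p = π*` it gives the gap recursion `η e_{t+1} + d_{t+1} ≤ γ P_{π*} (η e_t) + d_t`
for `e_t = V_t - V*`, `d_t = D(π_t, π*)`. The resolvent `M = ∑ (γ P_{π*})ᵏ` is monotone and
satisfies `M (γ P_{π*}) = M - 1`, so `a_t = M (η e_t + d_t)` obeys `a_{t+1} + η e_t ≤ a_t`.
Telescoping, `η T e_T ≤ a_0 ≤ 2 η u / (1 - γ)` and `M d_T ≤ a_0`; with `η u = Dc` and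
`T (1 - γ) ≥ 4` these are the two bounds.
-/

open Matrix

/-- The policy Bellman operator `(Γ_π V)(s) = ⟨c(s,·) + γ P_s V, π(·|s)⟩ + h(π(·|s))`. -/
noncomputable def Bellman {S A : Type*} [Fintype S] [Fintype A]
    (c : S → A → ℝ) (P : S → A → S → ℝ) (h : (A → ℝ) → ℝ) (γ : ℝ)
    (π : S → A → ℝ) (V : S → ℝ) (s : S) : ℝ :=
  (∑ a, π s a * (c s a + γ * ∑ s', P s a s' * V s')) + h (π s)

/-- The state-transition matrix `P_π(s,s') = ∑_a π(a|s) P(s'|s,a)` induced by a policy. -/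
noncomputable def polMat {S A : Type*} [Fintype S] [Fintype A]
    (P : S → A → S → ℝ) (π : S → A → ℝ) : Matrix S S ℝ :=
  fun s s' => ∑ a, π s a * P s a s'

open Finset

section Norm

variable {S : Type*} [Fintype S]

lemma pi_norm_le_of_nonneg_of_le {v : S → ℝ} {r : ℝ} (hr : 0 ≤ r) (hv : 0 ≤ v)
    (hvr : ∀ s, v s ≤ r) : ‖v‖ ≤ r :=
  (pi_norm_le_iff_of_nonneg hr).2 fun s => by rw [Real.norm_of_nonneg (hv s)]; exact hvr s

lemma apply_le_pi_norm (v : S → ℝ) (s : S) : v s ≤ ‖v‖ :=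
  (le_abs_self _).trans (norm_le_pi_norm v s)

lemma pi_norm_le_pi_norm_of_nonneg_of_le {v w : S → ℝ} (hv : 0 ≤ v) (hvw : v ≤ w) : ‖v‖ ≤ ‖w‖ :=
  pi_norm_le_of_nonneg_of_le (norm_nonneg w) hv fun s => (hvw s).trans (apply_le_pi_norm w s)

end Norm

lemma add_sum_range_le_of_succ_add_le {β : Type*} [AddCommMonoid β] [PartialOrder β]
    [IsOrderedAddMonoid β] {a e : ℕ → β} {T : ℕ} (h : ∀ t < T, a (t + 1) + e t ≤ a t) :
    a T + ∑ t ∈ range T, e t ≤ a 0 := by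
  induction T with
  | zero => simp
  | succ T ih =>
    rw [sum_range_succ, ← add_assoc, add_right_comm]
    exact (add_le_add (h T T.lt_succ_self) le_rfl).trans
      (ih fun t ht => h t (ht.trans T.lt_succ_self))

section Resolvent

variable {S : Type*}

lemma Matrix.tsum_apply_apply {f : ℕ → Matrix S S ℝ} (hf : Summable f) (i j : S) :
    (∑' k, f k) i j = ∑' k, f k i j :=
  (congrFun (tsum_apply hf) j).trans (tsum_apply (Pi.summable.1 hf i))

variable [Fintype S]

lemma Matrix.mulVec_mono_of_nonneg {M : Matrix S S ℝ} (hM : ∀ i j, 0 ≤ M i j) {v w : S → ℝ}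
    (hvw : v ≤ w) : M *ᵥ v ≤ M *ᵥ w :=
  fun i => dotProduct_le_dotProduct_of_nonneg_left hvw (hM i)

variable [DecidableEq S]

lemma Summable.tsum_pow_mulVec_sub {x : Matrix S S ℝ} (hx : Summable (x ^ ·)) (v : S → ℝ) :
    (∑' i : ℕ, x ^ i) *ᵥ (v - x *ᵥ v) = v := by
  rw [show v - x *ᵥ v = (1 - x) *ᵥ v by rw [sub_mulVec, one_mulVec], mulVec_mulVec,
    hx.tsum_pow_mul_one_sub, one_mulVec]

lemma Summable.nonpos_of_le_mulVec {x : Matrix S S ℝ} (hx : Summable (x ^ ·))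
    (hM : ∀ i j, 0 ≤ (∑' k : ℕ, x ^ k) i j) {w : S → ℝ} (hw : w ≤ x *ᵥ w) : w ≤ 0 := by
  rw [← hx.tsum_pow_mulVec_sub w, ← mulVec_zero (∑' k : ℕ, x ^ k)]
  exact mulVec_mono_of_nonneg hM (sub_nonpos.2 hw)

lemma Summable.tsum_pow_mulVec_add_le {x : Matrix S S ℝ} (hx : Summable (x ^ ·))
    (hM : ∀ i j, 0 ≤ (∑' k : ℕ, x ^ k) i j) {w e r : S → ℝ} (h : w ≤ x *ᵥ e + r) :
    (∑' k : ℕ, x ^ k) *ᵥ w + e ≤ (∑' k : ℕ, x ^ k) *ᵥ (e + r) := by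
  intro s
  have hres := congrFun (hx.tsum_pow_mulVec_sub e) s
  have hmono := mulVec_mono_of_nonneg hM h s
  simp only [mulVec_add, mulVec_sub, Pi.add_apply, Pi.sub_apply] at hres hmono ⊢
  linarith

namespace Matrix

variable {γ : ℝ} {Q : Matrix S S ℝ}

lemma smul_pow_apply_nonneg_of_mem_rowStochastic (hQ : Q ∈ rowStochastic ℝ S) (hγ0 : 0 ≤ γ)
    (k : ℕ) (i j : S) : 0 ≤ ((γ • Q) ^ k) i j := by
  rw [smul_pow, smul_apply, smul_eq_mul]
  exact mul_nonneg (pow_nonneg hγ0 k) (nonneg_of_mem_rowStochastic (pow_mem hQ k))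

lemma summable_pow_smul_of_mem_rowStochastic (hQ : Q ∈ rowStochastic ℝ S) (hγ0 : 0 ≤ γ)
    (hγ1 : γ < 1) : Summable ((γ • Q) ^ ·) := by
  refine Pi.summable.2 fun i => Pi.summable.2 fun j => ?_
  refine (summable_geometric_of_lt_one hγ0 hγ1).of_nonneg_of_le
    (fun k => smul_pow_apply_nonneg_of_mem_rowStochastic hQ hγ0 k i j) fun k => ?_
  rw [smul_pow, smul_apply, smul_eq_mul]
  exact mul_le_of_le_one_right (pow_nonneg hγ0 k) (le_one_of_mem_rowStochastic (pow_mem hQ k))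

lemma tsum_pow_smul_apply_nonneg_of_mem_rowStochastic (hQ : Q ∈ rowStochastic ℝ S)
    (hγ0 : 0 ≤ γ) (hγ1 : γ < 1) (i j : S) : 0 ≤ (∑' k : ℕ, (γ • Q) ^ k) i j := by
  rw [tsum_apply_apply (summable_pow_smul_of_mem_rowStochastic hQ hγ0 hγ1)]
  exact tsum_nonneg fun k => smul_pow_apply_nonneg_of_mem_rowStochastic hQ hγ0 k i j

lemma tsum_pow_smul_mulVec_one_of_mem_rowStochastic (hQ : Q ∈ rowStochastic ℝ S)
    (hγ0 : 0 ≤ γ) (hγ1 : γ < 1) : (∑' k : ℕ, (γ • Q) ^ k) *ᵥ 1 = (1 - γ)⁻¹ • 1 := by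
  have hres := (summable_pow_smul_of_mem_rowStochastic hQ hγ0 hγ1).tsum_pow_mulVec_sub 1
  rw [smul_mulVec, one_vecMul_of_mem_rowStochastic hQ,
    show (1 : S → ℝ) - γ • 1 = (1 - γ) • 1 by rw [sub_smul, one_smul], mulVec_smul] at hres
  rw [eq_inv_smul_iff₀ (sub_ne_zero.2 hγ1.ne'), hres]

lemma tsum_pow_smul_mulVec_le_of_mem_rowStochastic (hQ : Q ∈ rowStochastic ℝ S)
    (hγ0 : 0 ≤ γ) (hγ1 : γ < 1) (v : S → ℝ) (s : S) :
    ((∑' k : ℕ, (γ • Q) ^ k) *ᵥ v) s ≤ ‖v‖ / (1 - γ) := by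
  have hv : v ≤ ‖v‖ • 1 := fun s => by simpa using apply_le_pi_norm v s
  have := mulVec_mono_of_nonneg (tsum_pow_smul_apply_nonneg_of_mem_rowStochastic hQ hγ0 hγ1) hv s
  rwa [mulVec_smul, tsum_pow_smul_mulVec_one_of_mem_rowStochastic hQ hγ0 hγ1, smul_smul,
    Pi.smul_apply, Pi.one_apply, smul_eq_mul, mul_one, ← div_eq_mul_inv] at this

end Matrix

variable {γ : ℝ} {Q : Matrix S S ℝ}

lemma lyapunov_telescope (hQ : Q ∈ rowStochastic ℝ S) (hγ0 : 0 ≤ γ) (hγ1 : γ < 1) {η : ℝ}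
    {T : ℕ} {e d : ℕ → S → ℝ}
    (hrec : ∀ t < T, η • e (t + 1) + d (t + 1) ≤ (γ • Q) *ᵥ (η • e t) + d t) :
    (∑' k : ℕ, (γ • Q) ^ k) *ᵥ (η • e T + d T) + ∑ t ∈ range T, η • e t ≤
      (∑' k : ℕ, (γ • Q) ^ k) *ᵥ (η • e 0 + d 0) :=
  add_sum_range_le_of_succ_add_le (a := fun t => _ *ᵥ (η • e t + d t)) (e := fun t => η • e t)
    fun t ht => (summable_pow_smul_of_mem_rowStochastic hQ hγ0 hγ1).tsum_pow_mulVec_add_le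
      (tsum_pow_smul_apply_nonneg_of_mem_rowStochastic hQ hγ0 hγ1) (hrec t ht)

lemma epoch_bound_of_gap_recursion (hQ : Q ∈ rowStochastic ℝ S) (hγ0 : 0 ≤ γ) (hγ1 : γ < 1)
    {η u : ℝ} (hη : 0 < η) {T : ℕ} (hT : 4 / (1 - γ) ≤ T) {e d : ℕ → S → ℝ}
    (hrec : ∀ t < T, η • e (t + 1) + d (t + 1) ≤ (γ • Q) *ᵥ (η • e t) + d t)
    (heT : 0 ≤ e T) (hanti : ∀ t ≤ T, e T ≤ e t) (hdT : 0 ≤ d T)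
    (he0 : ‖e 0‖ ≤ u) (hd0 : ‖(∑' k : ℕ, (γ • Q) ^ k) *ᵥ d 0‖ ≤ η * u / (1 - γ)) :
    ‖e T‖ ≤ u / 2 ∧ ‖(∑' k : ℕ, (γ • Q) ^ k) *ᵥ d T‖ ≤ 2 * (η * u) / (1 - γ) := by
  set M := ∑' k : ℕ, (γ • Q) ^ k
  have h1γ : 0 < 1 - γ := sub_pos.2 hγ1
  have hu : 0 ≤ u := (norm_nonneg _).trans he0
  have hMnonneg : ∀ {v : S → ℝ}, 0 ≤ v → ∀ s, 0 ≤ (M *ᵥ v) s := fun hv s => by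
    simpa using mulVec_mono_of_nonneg
      (tsum_pow_smul_apply_nonneg_of_mem_rowStochastic hQ hγ0 hγ1) hv s
  have hsplit : ∀ t s, (M *ᵥ (η • e t + d t)) s = η * (M *ᵥ e t) s + (M *ᵥ d t) s :=
    fun t s => by simp [mulVec_add, mulVec_smul]
  have hstart : ∀ s, η * (M *ᵥ e 0) s + (M *ᵥ d 0) s ≤ 2 * (η * u) / (1 - γ) := fun s => by
    have he : (M *ᵥ e 0) s ≤ u / (1 - γ) :=
      (tsum_pow_smul_mulVec_le_of_mem_rowStochastic hQ hγ0 hγ1 (e 0) s).trans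
        (div_le_div_of_nonneg_right he0 h1γ.le)
    linarith [mul_le_mul_of_nonneg_left he hη.le, (apply_le_pi_norm _ s).trans hd0,
      show 2 * (η * u) / (1 - γ) = η * (u / (1 - γ)) + η * u / (1 - γ) by ring]
  have hend : ∀ s, η * (T * e T s) + η * (M *ᵥ e T) s + (M *ᵥ d T) s ≤ 2 * (η * u) / (1 - γ) :=
    fun s => by
    have hsum : T * e T s ≤ ∑ t ∈ range T, e t s := by
      simpa using card_nsmul_le_sum (range T) (e · s) (e T s)
        fun t ht => hanti t (mem_range.1 ht).le s
    have := lyapunov_telescope hQ hγ0 hγ1 hrec s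
    rw [Pi.add_apply, Finset.sum_apply, hsplit, hsplit] at this
    simp only [Pi.smul_apply, smul_eq_mul, ← mul_sum] at this
    linarith [hstart s, mul_le_mul_of_nonneg_left hsum hη.le]
  refine ⟨pi_norm_le_of_nonneg_of_le (by positivity) heT fun s => ?_,
    pi_norm_le_of_nonneg_of_le (by positivity) (hMnonneg hdT) fun s => ?_⟩
  · have hTe : T * e T s ≤ 2 * u / (1 - γ) := by
      refine le_of_mul_le_mul_left ?_ hη
      linarith [hend s, mul_nonneg hη.le (hMnonneg heT s), hMnonneg hdT s,
        show 2 * (η * u) / (1 - γ) = η * (2 * u / (1 - γ)) by ring]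
    have hT' : 4 ≤ T * (1 - γ) := (div_le_iff₀ h1γ).1 hT
    rw [le_div_iff₀ h1γ] at hTe
    nlinarith [mul_le_mul_of_nonneg_left hT' (heT s)]
  · linarith [hend s, mul_nonneg hη.le (hMnonneg heT s),
      mul_nonneg hη.le (mul_nonneg (Nat.cast_nonneg T) (heT s))]

end Resolvent

section Bellman

variable {S A : Type*} [Fintype S] [Fintype A] {c : S → A → ℝ} {P : S → A → S → ℝ}
  {h : (A → ℝ) → ℝ} {γ : ℝ}

lemma polMat_mem_rowStochastic [DecidableEq S] (hP0 : ∀ s a s', 0 ≤ P s a s')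
    (hP1 : ∀ s a, ∑ s', P s a s' = 1) {p : S → A → ℝ} (hp : ∀ s, p s ∈ stdSimplex ℝ A) :
    polMat P p ∈ rowStochastic ℝ S := by
  refine mem_rowStochastic_iff_sum.2 ⟨fun s s' => ?_, fun s => ?_⟩
  · exact sum_nonneg fun a _ => mul_nonneg ((hp s).1 a) (hP0 s a s')
  · simp only [polMat]
    rw [sum_comm]
    simp only [← mul_sum, hP1, mul_one]
    exact (hp s).2

lemma polMat_mulVec_apply (p : S → A → ℝ) (V : S → ℝ) (s : S) :
    (polMat P p *ᵥ V) s = ∑ a, p s a * ∑ s', P s a s' * V s' := by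
  simp only [mulVec, dotProduct, polMat, sum_mul, mul_sum, mul_assoc]
  exact sum_comm

lemma bellman_eq (p : S → A → ℝ) (V : S → ℝ) (s : S) :
    Bellman c P h γ p V s = ∑ a, p s a * c s a + γ * (polMat P p *ᵥ V) s + h (p s) := by
  simp only [Bellman, polMat_mulVec_apply, mul_add, sum_add_distrib, mul_sum, mul_left_comm γ]

lemma bellman_sub_bellman_policy (p q : S → A → ℝ) (V : S → ℝ) (s : S) :
    Bellman c P h γ p V s - Bellman c P h γ q V s =
      (∑ a, (c s a + γ * ∑ s', P s a s' * V s') * (p s a - q s a)) + h (p s) - h (q s) := by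
  simp only [Bellman, sub_mul, sum_sub_distrib, mul_comm (c s _ + _)]
  ring

lemma bellman_sub_bellman_value (p : S → A → ℝ) (V V' : S → ℝ) (s : S) :
    Bellman c P h γ p V s - Bellman c P h γ p V' s = ((γ • polMat P p) *ᵥ (V - V')) s := by
  rw [bellman_eq, bellman_eq, smul_mulVec, mulVec_sub, Pi.smul_apply, Pi.sub_apply, smul_eq_mul]
  ring

lemma bellman_mono (hγ : 0 ≤ γ) {p : S → A → ℝ} (hp : ∀ s s', 0 ≤ polMat P p s s')
    {V V' : S → ℝ} (hVV' : V ≤ V') (s : S) : Bellman c P h γ p V s ≤ Bellman c P h γ p V' s := by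
  have hdiff := bellman_sub_bellman_value (c := c) (P := P) (h := h) (γ := γ) p V V' s
  rw [smul_mulVec, Pi.smul_apply, smul_eq_mul] at hdiff
  have hQ : (polMat P p *ᵥ (V - V')) s ≤ 0 :=
    sum_nonpos fun s' _ => mul_nonpos_of_nonneg_of_nonpos (hp s s') (sub_nonpos.2 (hVV' s'))
  linarith [mul_nonpos_of_nonneg_of_nonpos hγ hQ]

lemma le_of_bellman_fixedPoint [DecidableEq S] (hγ0 : 0 ≤ γ) (hγ1 : γ < 1) {p : S → A → ℝ}
    (hp : polMat P p ∈ rowStochastic ℝ S) {W V : S → ℝ}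
    (hW : ∀ s, W s = Bellman c P h γ p W s) (hV : ∀ s, Bellman c P h γ p V s ≤ V s) : W ≤ V := by
  have hsub : W - V ≤ (γ • polMat P p) *ᵥ (W - V) := fun s => by
    rw [← bellman_sub_bellman_value]
    linarith [hW s, hV s, show (W - V) s = W s - V s from rfl]
  exact sub_nonpos.1 ((summable_pow_smul_of_mem_rowStochastic hp hγ0 hγ1).nonpos_of_le_mulVec
    (tsum_pow_smul_apply_nonneg_of_mem_rowStochastic hp hγ0 hγ1) hsub)

end Bellman

section MirrorDescent

variable {S A : Type*} [Fintype S] [Fintype A] {c : S → A → ℝ} {P : S → A → S → ℝ}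
  {h : (A → ℝ) → ℝ} {γ η : ℝ} {D : (A → ℝ) → (A → ℝ) → ℝ}

lemma mul_bellman_sub_bellman_le_of_prox (hD : ∀ x y, 0 ≤ D x y) {p p' q : S → A → ℝ}
    {V : S → ℝ} {s : S}
    (hprox : η * ((∑ a, (c s a + γ * ∑ s', P s a s' * V s') * (p' s a - q s a))
        + h (p' s) - h (q s)) + D (p s) (p' s) ≤ D (p s) (q s) - D (p' s) (q s)) :
    η * (Bellman c P h γ p' V s - Bellman c P h γ q V s) ≤ D (p s) (q s) - D (p' s) (q s) := by
  rw [bellman_sub_bellman_policy]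
  linarith [hD (p s) (p' s)]

lemma bellman_le_bellman_of_prox (hη : 0 < η) (hD : ∀ x y, 0 ≤ D x y)
    (hDzero : ∀ x, D x x = 0) {p p' : S → A → ℝ} {V : S → ℝ} {s : S}
    (hprox : η * ((∑ a, (c s a + γ * ∑ s', P s a s' * V s') * (p' s a - p s a))
        + h (p' s) - h (p s)) + D (p s) (p' s) ≤ D (p s) (p s) - D (p' s) (p s)) :
    Bellman c P h γ p' V s ≤ Bellman c P h γ p V s := by
  have := mul_bellman_sub_bellman_le_of_prox hD hprox
  rw [hDzero] at this
  exact sub_nonpos.1 (nonpos_of_mul_nonpos_right (by linarith [hD (p' s) (p s)]) hη)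

lemma gap_step_le_of_prox (hD : ∀ x y, 0 ≤ D x y) {p p' πstar : S → A → ℝ}
    {V V' Vstar : S → ℝ} (hVstar : ∀ s, Vstar s = Bellman c P h γ πstar Vstar s)
    (hV' : ∀ s, V' s = Bellman c P h γ p' V s)
    (hprox : ∀ s, η * ((∑ a, (c s a + γ * ∑ s', P s a s' * V s') * (p' s a - πstar s a))
        + h (p' s) - h (πstar s)) + D (p s) (p' s) ≤ D (p s) (πstar s) - D (p' s) (πstar s)) :
    η • (V' - Vstar) + (fun s => D (p' s) (πstar s)) ≤
      (γ • polMat P πstar) *ᵥ (η • (V - Vstar)) + fun s => D (p s) (πstar s) := fun s => by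
  have h1 := mul_bellman_sub_bellman_le_of_prox hD (hprox s)
  have h2 := bellman_sub_bellman_value (c := c) (P := P) (h := h) (γ := γ) πstar V Vstar s
  rw [mulVec_smul]
  simp only [Pi.add_apply, Pi.smul_apply, Pi.sub_apply, smul_eq_mul]
  linear_combination h1 + η * h2 + η * hV' s - η * hVstar s

variable {T : ℕ} {π : ℕ → S → A → ℝ} {V : ℕ → S → ℝ}

lemma bellman_iterate_le_of_improving (hγ : 0 ≤ γ) (hπ : ∀ t s s', 0 ≤ polMat P (π t) s s')
    (himp : ∀ t < T, ∀ s, Bellman c P h γ (π (t + 1)) (V t) s ≤ Bellman c P h γ (π t) (V t) s)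
    (hupd : ∀ t < T, ∀ s, V (t + 1) s = Bellman c P h γ (π (t + 1)) (V t) s)
    (hinit : ∀ s, Bellman c P h γ (π 0) (V 0) s ≤ V 0 s) :
    ∀ t ≤ T, ∀ s, Bellman c P h γ (π t) (V t) s ≤ V t s := by
  intro t
  induction t with
  | zero => exact fun _ => hinit
  | succ t ih =>
    intro ht s
    have hdec : V (t + 1) ≤ V t := fun s' =>
      (hupd t ht s').trans_le ((himp t ht s').trans (ih (Nat.le_of_succ_le ht) s'))
    exact (bellman_mono hγ (hπ _) hdec s).trans_eq (hupd t ht s).symm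

lemma iterate_le_iterate_of_improving (hγ : 0 ≤ γ) (hπ : ∀ t s s', 0 ≤ polMat P (π t) s s')
    (himp : ∀ t < T, ∀ s, Bellman c P h γ (π (t + 1)) (V t) s ≤ Bellman c P h γ (π t) (V t) s)
    (hupd : ∀ t < T, ∀ s, V (t + 1) s = Bellman c P h γ (π (t + 1)) (V t) s)
    (hinit : ∀ s, Bellman c P h γ (π 0) (V 0) s ≤ V 0 s) :
    ∀ t ≤ T, V T ≤ V t := by
  intro t ht
  induction ht using Nat.decreasingInduction with
  | self => exact le_rfl
  | of_succ t ht ih =>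
    exact ih.trans fun s => (hupd t ht s).trans_le ((himp t ht s).trans
      (bellman_iterate_le_of_improving hγ hπ himp hupd hinit t ht.le s))

end MirrorDescent

/-- Epoch contraction for deterministic VMD. If at the start of the epoch
`‖V̂_k − V*‖_∞ ≤ u`, `‖(I−γP_{π*})⁻¹ D_{π̂_k}^{π*}‖_∞ ≤ Dc/(1−γ)` and
`V̂_k ≥ Γ_{π̂_k} V̂_k`, then running `T = ⌈4/(1−γ)⌉` VMD iterations with stepsize
`η = Dc/u` yields `‖V^{π̂_{k+1}} − V*‖_∞ ≤ ‖V̂_{k+1} − V*‖_∞ ≤ u/2` and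
`‖(I−γP_{π*})⁻¹ D_{π̂_{k+1}}^{π*}‖_∞ ≤ 2Dc/(1−γ)`. -/
theorem vmd_epoch_contraction
    {S A : Type*} [Fintype S] [DecidableEq S] [Fintype A]
    (γ : ℝ) (hγ0 : 0 < γ) (hγ1 : γ < 1)
    (c : S → A → ℝ) (P : S → A → S → ℝ)
    (hP0 : ∀ s a s', 0 ≤ P s a s') (hP1 : ∀ s a, ∑ s', P s a s' = 1)
    (h : (A → ℝ) → ℝ)
    (D : (A → ℝ) → (A → ℝ) → ℝ) (hD : ∀ x y, 0 ≤ D x y) (hDzero : ∀ x, D x x = 0)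
    (u Dc : ℝ) (hu : 0 < u) (hDc : 0 < Dc)
    (T : ℕ) (hT : T = ⌈(4 : ℝ) / (1 - γ)⌉₊)
    (η : ℝ) (hη : η = Dc / u)
    (π : ℕ → S → A → ℝ) (hπ : ∀ t s, π t s ∈ stdSimplex ℝ A)
    (V : ℕ → S → ℝ)
    (πstar : S → A → ℝ) (hπstar : ∀ s, πstar s ∈ stdSimplex ℝ A)
    (Vstar : S → ℝ) (hVstarfix : ∀ s, Vstar s = Bellman c P h γ πstar Vstar s)
    (hVstaropt : ∀ p : S → A → ℝ, (∀ s, p s ∈ stdSimplex ℝ A) →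
      ∀ W : S → ℝ, (∀ s, W s = Bellman c P h γ p W s) → ∀ s, Vstar s ≤ W s)
    (hgap : ‖V 0 - Vstar‖ ≤ u)
    (hbreg : ‖(∑' i : ℕ, (γ • polMat P πstar) ^ i).mulVec
        (fun s => D (π 0 s) (πstar s))‖ ≤ Dc / (1 - γ))
    (hinit : ∀ s, Bellman c P h γ (π 0) (V 0) s ≤ V 0 s)
    (hthree : ∀ t < T, ∀ s, ∀ p ∈ stdSimplex ℝ A,
      η * ((∑ a, (c s a + γ * ∑ s', P s a s' * V t s') * (π (t + 1) s a - p a))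
            + h (π (t + 1) s) - h p) + D (π t s) (π (t + 1) s)
        ≤ D (π t s) p - D (π (t + 1) s) p)
    (hupd : ∀ t < T, ∀ s, V (t + 1) s = Bellman c P h γ (π (t + 1)) (V t) s)
    (W : S → ℝ) (hW : ∀ s, W s = Bellman c P h γ (π T) W s) :
    ‖W - Vstar‖ ≤ ‖V T - Vstar‖ ∧ ‖V T - Vstar‖ ≤ u / 2 ∧
      ‖(∑' i : ℕ, (γ • polMat P πstar) ^ i).mulVec
        (fun s => D (π T s) (πstar s))‖ ≤ 2 * Dc / (1 - γ) := by
  have hη0 : 0 < η := hη ▸ div_pos hDc hu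
  have hstoch : ∀ {p : S → A → ℝ}, (∀ s, p s ∈ stdSimplex ℝ A) →
      polMat P p ∈ rowStochastic ℝ S := polMat_mem_rowStochastic hP0 hP1
  have hπnonneg : ∀ t s s', 0 ≤ polMat P (π t) s s' := fun t => (hstoch (hπ t)).1
  have himp : ∀ t < T, ∀ s,
      Bellman c P h γ (π (t + 1)) (V t) s ≤ Bellman c P h γ (π t) (V t) s :=
    fun t ht s => bellman_le_bellman_of_prox hη0 hD hDzero (hthree t ht s _ (hπ t s))
  have hWV : W ≤ V T := le_of_bellman_fixedPoint hγ0.le hγ1 (hstoch (hπ T)) hW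
    (bellman_iterate_le_of_improving hγ0.le hπnonneg himp hupd hinit T le_rfl)
  have hVW : Vstar ≤ W := hVstaropt _ (hπ T) W hW
  have hDc_eq : Dc = η * u := by rw [hη]; field_simp
  rw [hDc_eq] at hbreg ⊢
  obtain ⟨hgapT, hbregT⟩ := epoch_bound_of_gap_recursion (hstoch hπstar) hγ0.le hγ1 hη0
    (by rw [hT]; exact Nat.le_ceil _) (e := fun t => V t - Vstar)
    (d := fun t s => D (π t s) (πstar s))
    (fun t ht => gap_step_le_of_prox hD hVstarfix (hupd t ht) fun s =>
      hthree t ht s _ (hπstar s))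
    (sub_nonneg.2 (hVW.trans hWV))
    (fun t ht => sub_le_sub_right
      (iterate_le_iterate_of_improving hγ0.le hπnonneg himp hupd hinit t ht) _)
    (fun s => hD _ _) hgap hbreg
  exact ⟨pi_norm_le_pi_norm_of_nonneg_of_le (sub_nonneg.2 hVW) (sub_le_sub_right hWV _),
    hgapT, hbregT⟩
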